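/- Let 𝓛 : ℤ → ℝ be a function and a ∈ ℝ, and set S = {j ∈ ℤ : min(𝓛_j, 𝓛_{j−1}) ≤ a}. If j₁ < j₂ are consecutive elements of S (i.e., j₁, j₂ ∈ S and no element of S lies strictly between them), then either j₂ = j₁ + 1, or 𝓛_{j₁−1} ≤ a, 𝓛_{j₂} ≤ a, and 𝓛_j > a for every j ∈ [j₁, j₂−1] ∩ ℤ; in the latter case 𝓛_{j₁−1} ∨ 𝓛_{j₂} < min_{j∈[j₁,j₂−1]∩ℤ} 𝓛_j. In particular, if 𝓛 is the first coordinate of a two-sided walk defining the graph ℋ, then any two consecutive elements of S are adjacent in ℋ, so every finite subset of S of the form S ∩ [i₁,i₂] containing its endpoints is connected in ℋ. -/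

import Mathlib

/-- The condition `f(i₁ - 1) ∨ f(i₂) < min_{j ∈ [i₁, i₂ - 1] ∩ ℤ} f(j)` for a
function `f : ℤ → ℝ`. -/
def walkCond (f : ℤ → ℝ) (i₁ i₂ : ℤ) : Prop :=
  ∀ j ∈ Finset.Icc i₁ (i₂ - 1), max (f (i₁ - 1)) (f i₂) < f j

/-- The graph `ℋ` associated to a two-sided walk `𝒵 = (𝓛, 𝓡)`: vertex set `ℤ`,
with `i₁ < i₂` adjacent iff `walkCond 𝓛 i₁ i₂`, or `walkCond 𝓡 i₁ i₂`, or
`i₂ - i₁ = 1`. -/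
def hGraph (Lw Rw : ℤ → ℝ) : SimpleGraph ℤ where
  Adj x y := (x < y ∧ (walkCond Lw x y ∨ walkCond Rw x y ∨ y - x = 1)) ∨
    (y < x ∧ (walkCond Lw y x ∨ walkCond Rw y x ∨ x - y = 1))
  symm := by
    constructor
    intro x y h
    rcases h with h | h
    · exact Or.inr h
    · exact Or.inl h
  loopless := by
    constructor
    intro x h
    rcases h with ⟨h, -⟩ | ⟨h, -⟩ <;> exact lt_irrefl x h

/-- The set `S = {j ∈ ℤ : min(𝓛_j, 𝓛_{j-1}) ≤ a}`. -/
def lowSet (Lw : ℤ → ℝ) (a : ℝ) : Set ℤ := {j : ℤ | min (Lw j) (Lw (j - 1)) ≤ a}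

lemma lowSet_consecutive_main (Lw : ℤ → ℝ) (a : ℝ) (j₁ j₂ : ℤ) (hlt : j₁ < j₂)
    (h1 : j₁ ∈ lowSet Lw a) (h2 : j₂ ∈ lowSet Lw a)
    (hb : ∀ j : ℤ, j₁ < j → j < j₂ → j ∉ lowSet Lw a) :
    j₂ = j₁ + 1 ∨
      (Lw (j₁ - 1) ≤ a ∧ Lw j₂ ≤ a ∧ (∀ j ∈ Finset.Icc j₁ (j₂ - 1), a < Lw j) ∧
        ∀ j ∈ Finset.Icc j₁ (j₂ - 1), max (Lw (j₁ - 1)) (Lw j₂) < Lw j) := by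
  by_cases hcase : j₂ = j₁ + 1
  · exact Or.inl hcase
  right
  have hlt2 : j₁ + 1 < j₂ := by omega
  have hnot : ∀ j : ℤ, j₁ < j → j < j₂ → a < Lw j ∧ a < Lw (j - 1) := by
    intro j h1' h2'
    have := hb j h1' h2'
    simp only [lowSet, Set.mem_setOf_eq, not_le, lt_min_iff] at this
    exact this
  have hmid : ∀ j ∈ Finset.Icc j₁ (j₂ - 1), a < Lw j := by
    intro j hj
    rw [Finset.mem_Icc] at hj
    by_cases hj2 : j = j₂ - 1
    · exact (hnot j (by omega) (by omega)).1
    · have := (hnot (j + 1) (by omega) (by omega)).2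
      simpa using this
  have hL1 : Lw (j₁ - 1) ≤ a := by
    have hj₁ : a < Lw j₁ := hmid j₁ (by rw [Finset.mem_Icc]; omega)
    rcases min_le_iff.mp (show min (Lw j₁) (Lw (j₁ - 1)) ≤ a from h1) with h | h
    · exact absurd h (not_le.mpr hj₁)
    · exact h
  have hL2 : Lw j₂ ≤ a := by
    have hj₂ : a < Lw (j₂ - 1) := hmid (j₂ - 1) (by rw [Finset.mem_Icc]; omega)
    rcases min_le_iff.mp (show min (Lw j₂) (Lw (j₂ - 1)) ≤ a from h2) with h | h
    · exact h
    · exact absurd h (not_le.mpr hj₂)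
  refine ⟨hL1, hL2, hmid, fun j hj => ?_⟩
  exact lt_of_le_of_lt (max_le hL1 hL2) (hmid j hj)

/-- Let `𝓛 : ℤ → ℝ` and `a ∈ ℝ`, and set `S = {j : min(𝓛_j, 𝓛_{j-1}) ≤ a}`. If
`j₁ < j₂` are consecutive elements of `S`, then either `j₂ = j₁ + 1`, or
`𝓛_{j₁-1} ≤ a`, `𝓛_{j₂} ≤ a` and `𝓛_j > a` for every `j ∈ [j₁, j₂ - 1] ∩ ℤ`, in
which case `𝓛_{j₁-1} ∨ 𝓛_{j₂} < min_{j ∈ [j₁, j₂-1] ∩ ℤ} 𝓛_j`. In particular, if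
`𝓛` is the first coordinate of a two-sided walk `(𝓛, 𝓡)` defining the graph `ℋ`,
then consecutive elements of `S` are adjacent in `ℋ`, and every subset of `S` of
the form `S ∩ [i₁, i₂]` containing its endpoints `i₁, i₂ ∈ S` is connected in `ℋ`. -/
theorem lowSet_consecutive_adjacent (Lw : ℤ → ℝ) (a : ℝ) :
    (∀ j₁ j₂ : ℤ, j₁ < j₂ → j₁ ∈ lowSet Lw a → j₂ ∈ lowSet Lw a →
      (∀ j : ℤ, j₁ < j → j < j₂ → j ∉ lowSet Lw a) →
      (j₂ = j₁ + 1 ∨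
        (Lw (j₁ - 1) ≤ a ∧ Lw j₂ ≤ a ∧ (∀ j ∈ Finset.Icc j₁ (j₂ - 1), a < Lw j) ∧
          ∀ j ∈ Finset.Icc j₁ (j₂ - 1), max (Lw (j₁ - 1)) (Lw j₂) < Lw j)) ∧
      (∀ Rw : ℤ → ℝ, (hGraph Lw Rw).Adj j₁ j₂)) ∧
    ∀ (Rw : ℤ → ℝ) (i₁ i₂ : ℤ), i₁ ∈ lowSet Lw a → i₂ ∈ lowSet Lw a → i₁ ≤ i₂ →
      ((hGraph Lw Rw).induce (lowSet Lw a ∩ Set.Icc i₁ i₂)).Connected := by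
  classical
  have adj : ∀ (Rw : ℤ → ℝ) (j₁ j₂ : ℤ), j₁ < j₂ → j₁ ∈ lowSet Lw a →
      j₂ ∈ lowSet Lw a → (∀ j : ℤ, j₁ < j → j < j₂ → j ∉ lowSet Lw a) →
      (hGraph Lw Rw).Adj j₁ j₂ := by
    intro Rw j₁ j₂ hlt h1 h2 hb
    rcases lowSet_consecutive_main Lw a j₁ j₂ hlt h1 h2 hb with h | h
    · exact Or.inl ⟨hlt, Or.inr (Or.inr (by omega))⟩
    · exact Or.inl ⟨hlt, Or.inl h.2.2.2⟩
  refine ⟨fun j₁ j₂ hlt h1 h2 hb =>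
    ⟨lowSet_consecutive_main Lw a j₁ j₂ hlt h1 h2 hb,
      fun Rw => adj Rw j₁ j₂ hlt h1 h2 hb⟩, ?_⟩
  intro Rw i₁ i₂ hi₁ hi₂ hle
  set S : Set ℤ := lowSet Lw a ∩ Set.Icc i₁ i₂ with hSdef
  have hi₁S : i₁ ∈ S := ⟨hi₁, le_refl _, hle⟩
  rw [SimpleGraph.connected_iff]
  refine ⟨?_, ⟨⟨i₁, hi₁S⟩⟩⟩
  have reach : ∀ n : ℕ, ∀ k : ℤ, ∀ hk : k ∈ S, (k - i₁).toNat ≤ n →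
      ((hGraph Lw Rw).induce S).Reachable ⟨i₁, hi₁S⟩ ⟨k, hk⟩ := by
    intro n
    induction n with
    | zero =>
      intro k hk hkn
      have hik : i₁ ≤ k := hk.2.1
      have : k = i₁ := by omega
      subst this
      exact SimpleGraph.Reachable.refl _
    | succ n ih =>
      intro k hk hkn
      by_cases hki : k = i₁
      · subst hki; exact SimpleGraph.Reachable.refl _
      have hik : i₁ < k := lt_of_le_of_ne hk.2.1 (Ne.symm hki)
      obtain ⟨j, ⟨hjlow, hji, hjk⟩, hjmax⟩ :=
        Int.exists_greatest_of_bdd (P := fun z => z ∈ lowSet Lw a ∧ i₁ ≤ z ∧ z < k)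
          ⟨k, fun z hz => le_of_lt hz.2.2⟩ ⟨i₁, hi₁, le_refl _, hik⟩
      have hjS : j ∈ S := ⟨hjlow, hji, le_trans (le_of_lt hjk) hk.2.2⟩
      have hbetween : ∀ m : ℤ, j < m → m < k → m ∉ lowSet Lw a := by
        intro m h1' h2' hm
        have := hjmax m ⟨hm, by omega, h2'⟩
        omega
      have hadj : ((hGraph Lw Rw).induce S).Adj ⟨j, hjS⟩ ⟨k, hk⟩ :=
        adj Rw j k hjk hjlow hk.1 hbetween
      exact (ih j hjS (by omega)).trans hadj.reachable
  intro x y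
  exact ((reach (x.1 - i₁).toNat x.1 x.2 le_rfl).symm.trans
    (reach (y.1 - i₁).toNat y.1 y.2 le_rfl))
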